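/- Let (Θ,ω): (𝕍,E) ⇢ (𝕍',E') be a strong Dirac morphism. For t ∈ [0,1] define the morphism (j_t, tω): 𝕍 ⇢ 𝕍⊕𝕍' by j_t(v) = ((1−t)v, tΘ(v)). Then ker(j_t, tω) = 0 for t ≠ 1 and ker(j₁, ω) = ker(Θ,ω); consequently E ∩ ker(j_t, tω) = 0 for all t, and the forward images E_t of E under (j_t, tω) form a family of Lagrangian subspaces of 𝕍⊕𝕍' with E₀ = E ⊕ (V')* and E₁ = V* ⊕ E'. -/

import Mathlib

/-! Dirac structures on `V ⊕ V*` and strong Dirac morphisms.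
STATEMENT 0: the composition of strong Dirac morphisms is a strong Dirac morphism. -/

/-- The canonical split symmetric pairing on `V ⊕ V*`. -/
def diracPair {V : Type*} [AddCommGroup V] [Module ℝ V]
    (x y : V × Module.Dual ℝ V) : ℝ :=
  x.2 y.1 + y.2 x.1

/-- `E` is Lagrangian iff it coincides with its orthogonal w.r.t. the split pairing. -/
def IsLagrangian {V : Type*} [AddCommGroup V] [Module ℝ V]
    (E : Submodule ℝ (V × Module.Dual ℝ V)) : Prop :=
  ∀ x, (∀ y ∈ E, diracPair x y = 0) ↔ x ∈ E

/-- The relation on `V ⊕ V*` × `V' ⊕ V'*` defined by a morphism `(Θ, ω)`: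
`(v,α) ∼ (v',α')` iff `v' = Θ v` and `α = ι_v ω + Θ* α'`. -/
def DiracRel {V V' : Type*} [AddCommGroup V] [Module ℝ V] [AddCommGroup V'] [Module ℝ V']
    (Θ : V →ₗ[ℝ] V') (ω : V →ₗ[ℝ] Module.Dual ℝ V)
    (x : V × Module.Dual ℝ V) (x' : V' × Module.Dual ℝ V') : Prop :=
  x'.1 = Θ x.1 ∧ x.2 = ω x.1 + x'.2.comp Θ

/-- The forward image of a subspace `E` under the morphism `(Θ, ω)`. -/
def fwdImage {V V' : Type*} [AddCommGroup V] [Module ℝ V] [AddCommGroup V'] [Module ℝ V']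
    (Θ : V →ₗ[ℝ] V') (ω : V →ₗ[ℝ] Module.Dual ℝ V)
    (E : Submodule ℝ (V × Module.Dual ℝ V)) : Set (V' × Module.Dual ℝ V') :=
  {x' | ∃ x ∈ E, DiracRel Θ ω x x'}

/-- `(Θ, ω)` is a Dirac morphism `(𝕍, E) ⇢ (𝕍', E')`: `E'` is the forward image of `E`. -/
def IsDiracMorphism {V V' : Type*} [AddCommGroup V] [Module ℝ V] [AddCommGroup V'] [Module ℝ V']
    (Θ : V →ₗ[ℝ] V') (ω : V →ₗ[ℝ] Module.Dual ℝ V)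
    (E : Submodule ℝ (V × Module.Dual ℝ V)) (E' : Submodule ℝ (V' × Module.Dual ℝ V')) : Prop :=
  (E' : Set (V' × Module.Dual ℝ V')) = fwdImage Θ ω E

/-- Strong Dirac morphism: moreover `E ∩ ker(Θ,ω) = 0`. -/
def IsStrongDiracMorphism {V V' : Type*} [AddCommGroup V] [Module ℝ V]
    [AddCommGroup V'] [Module ℝ V']
    (Θ : V →ₗ[ℝ] V') (ω : V →ₗ[ℝ] Module.Dual ℝ V)
    (E : Submodule ℝ (V × Module.Dual ℝ V)) (E' : Submodule ℝ (V' × Module.Dual ℝ V')) : Prop :=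
  IsDiracMorphism Θ ω E E' ∧ ∀ x ∈ E, DiracRel Θ ω x 0 → x = 0

/-!
The B-transform `(v, α) ↦ (v, α - ι_v ω)` is an isometry of `V ⊕ V*` because `ω` is skew, and it
reduces the forward image under `(φ, ω)` to the forward image `F` under `(φ, 0)`. That `F` is
isotropic is a direct computation. For coisotropy, let `(w, β) ⊥ F`. Since `F ⊇ 0 ⊕ ann(range φ)`,
`w = φ u`. The functional `(v, α) ↦ α u + β (φ v)` on `E` vanishes whenever `α` kills `ker φ`
(then `α = φ* δ` and `(φ v, δ) ∈ F`), so it equals `(v, α) ↦ α k` for some `k ∈ ker φ`; then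
`(u - k, φ* β)` is orthogonal to `E`, hence lies in `E`, and maps to `(w, β)`.

For the path itself, `j₀ = inl`, `j₁ = inr ∘ Θ`, and `j_t` is injective for `t ≠ 1`.
-/

open Module

lemma LinearMap.exists_apply_eq_of_ker_le_ker {A B : Type*} [AddCommGroup A] [Module ℝ A]
    [AddCommGroup B] [Module ℝ B] [FiniteDimensional ℝ B]
    (ρ : A →ₗ[ℝ] Dual ℝ B) (c : Dual ℝ A) (hc : LinearMap.ker ρ ≤ LinearMap.ker c) :
    ∃ k : B, ∀ x, c x = ρ x k := by
  have hc_range : c ∈ LinearMap.range ρ.dualMap := by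
    rw [LinearMap.range_dualMap_eq_dualAnnihilator_ker, Submodule.mem_dualAnnihilator]
    exact fun x hx => hc hx
  obtain ⟨g, rfl⟩ := hc_range
  obtain ⟨k, rfl⟩ := (evalEquiv ℝ B).surjective g
  exact ⟨k, fun _ => rfl⟩

section

variable {V W : Type*} [AddCommGroup V] [Module ℝ V] [AddCommGroup W] [Module ℝ W]

lemma diracRel_zero_iff (φ : V →ₗ[ℝ] W) (ω : V →ₗ[ℝ] Dual ℝ V) (x : V × Dual ℝ V) :
    DiracRel φ ω x 0 ↔ φ x.1 = 0 ∧ x.2 = ω x.1 := by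
  simp [DiracRel, eq_comm]

def fwdImageSubmodule (φ : V →ₗ[ℝ] W) (ω : V →ₗ[ℝ] Dual ℝ V)
    (E : Submodule ℝ (V × Dual ℝ V)) : Submodule ℝ (W × Dual ℝ W) where
  carrier := fwdImage φ ω E
  add_mem' := by
    rintro _ _ ⟨x, hx, hx₁, hx₂⟩ ⟨y, hy, hy₁, hy₂⟩
    refine ⟨x + y, E.add_mem hx hy, ?_, ?_⟩
    · simp [hx₁, hy₁]
    · simp only [Prod.snd_add, Prod.fst_add, map_add, LinearMap.add_comp, hx₂, hy₂]
      abel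
  zero_mem' := ⟨0, E.zero_mem, by simp [DiracRel]⟩
  smul_mem' := by
    rintro a _ ⟨x, hx, hx₁, hx₂⟩
    refine ⟨a • x, E.smul_mem a hx, ?_, ?_⟩
    · simp [hx₁]
    · simp [hx₂, smul_add, LinearMap.smul_comp]

lemma coe_fwdImageSubmodule (φ : V →ₗ[ℝ] W) (ω : V →ₗ[ℝ] Dual ℝ V)
    (E : Submodule ℝ (V × Dual ℝ V)) :
    (fwdImageSubmodule φ ω E : Set (W × Dual ℝ W)) = fwdImage φ ω E := rfl

lemma mem_fwdImageSubmodule {φ : V →ₗ[ℝ] W} {ω : V →ₗ[ℝ] Dual ℝ V}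
    {E : Submodule ℝ (V × Dual ℝ V)} {x' : W × Dual ℝ W} :
    x' ∈ fwdImageSubmodule φ ω E ↔ ∃ x ∈ E, DiracRel φ ω x x' := Iff.rfl

lemma mem_fwdImageSubmodule_zero {φ : V →ₗ[ℝ] W} {E : Submodule ℝ (V × Dual ℝ V)}
    {w : W} {β : Dual ℝ W} :
    (w, β) ∈ fwdImageSubmodule φ 0 E ↔ ∃ v, (v, β.comp φ) ∈ E ∧ φ v = w := by
  constructor
  · rintro ⟨⟨v, α⟩, hv, hw, hα⟩
    simp only [LinearMap.zero_apply, zero_add] at hα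
    exact ⟨v, hα ▸ hv, hw.symm⟩
  · rintro ⟨v, hv, rfl⟩
    exact ⟨(v, β.comp φ), hv, rfl, by simp⟩

lemma IsLagrangian.map {E : Submodule ℝ (V × Dual ℝ V)} (hE : IsLagrangian E)
    (e : (V × Dual ℝ V) ≃ₗ[ℝ] (V × Dual ℝ V)) (he : ∀ x y, diracPair (e x) (e y) = diracPair x y) :
    IsLagrangian (E.map (e : (V × Dual ℝ V) →ₗ[ℝ] (V × Dual ℝ V))) := by
  intro x
  have hx : ∀ z, diracPair x (e z) = diracPair (e.symm x) z := fun z => by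
    simpa using he (e.symm x) z
  rw [Submodule.mem_map_equiv, ← hE]
  simp only [Submodule.mem_map, LinearEquiv.coe_coe, forall_exists_index, and_imp,
    forall_apply_eq_imp_iff₂, hx]

/-- The `B`-field transform `(v, α) ↦ (v, α - ι_v ω)`. -/
def bTransform (ω : V →ₗ[ℝ] Dual ℝ V) : (V × Dual ℝ V) ≃ₗ[ℝ] (V × Dual ℝ V) :=
  (LinearEquiv.refl ℝ V).skewProd (LinearEquiv.refl ℝ (Dual ℝ V)) (-ω)

lemma bTransform_apply (ω : V →ₗ[ℝ] Dual ℝ V) (x : V × Dual ℝ V) :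
    bTransform ω x = (x.1, x.2 - ω x.1) := by
  simp [bTransform, sub_eq_add_neg]

lemma diracPair_bTransform {ω : V →ₗ[ℝ] Dual ℝ V} (hω : ∀ v, ω v v = 0) (x y : V × Dual ℝ V) :
    diracPair (bTransform ω x) (bTransform ω y) = diracPair x y := by
  have hskew : ω x.1 y.1 + ω y.1 x.1 = 0 := by
    simpa [hω] using hω (x.1 + y.1)
  simp only [diracPair, bTransform_apply, LinearMap.sub_apply]
  linarith

lemma diracRel_iff_bTransform (φ : V →ₗ[ℝ] W) (ω : V →ₗ[ℝ] Dual ℝ V) (x : V × Dual ℝ V)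
    (x' : W × Dual ℝ W) : DiracRel φ ω x x' ↔ DiracRel φ 0 (bTransform ω x) x' := by
  simp [DiracRel, bTransform_apply, sub_eq_iff_eq_add']

lemma fwdImageSubmodule_eq_bTransform (φ : V →ₗ[ℝ] W) (ω : V →ₗ[ℝ] Dual ℝ V)
    (E : Submodule ℝ (V × Dual ℝ V)) :
    fwdImageSubmodule φ ω E = fwdImageSubmodule φ 0 (E.map (bTransform ω : _ →ₗ[ℝ] _)) := by
  ext x'
  simp only [mem_fwdImageSubmodule, Submodule.mem_map, LinearEquiv.coe_coe,
    exists_exists_and_eq_and, diracRel_iff_bTransform φ ω]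

section Pushforward

variable {φ : V →ₗ[ℝ] W} {E : Submodule ℝ (V × Dual ℝ V)}

lemma diracPair_eq_zero_of_mem_fwdImageSubmodule_zero (hE : IsLagrangian E)
    {x y : W × Dual ℝ W} (hx : x ∈ fwdImageSubmodule φ 0 E) (hy : y ∈ fwdImageSubmodule φ 0 E) :
    diracPair x y = 0 := by
  obtain ⟨w, β⟩ := x
  obtain ⟨w', β'⟩ := y
  obtain ⟨v, hv, rfl⟩ := mem_fwdImageSubmodule_zero.mp hx
  obtain ⟨v', hv', rfl⟩ := mem_fwdImageSubmodule_zero.mp hy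
  simpa [diracPair] using (hE _).mpr hv _ hv'

lemma mem_range_of_forall_diracPair_eq_zero {w : W} {β : Dual ℝ W}
    (hperp : ∀ y ∈ fwdImageSubmodule φ 0 E, diracPair (w, β) y = 0) :
    w ∈ LinearMap.range φ := by
  rw [← Subspace.forall_mem_dualAnnihilator_apply_eq_zero_iff]
  intro δ hδ
  have hδφ : δ.comp φ = 0 := by
    ext v
    exact (Submodule.mem_dualAnnihilator δ).mp hδ (φ v) ⟨v, rfl⟩
  have h0 : ((0 : W), δ) ∈ fwdImageSubmodule φ 0 E :=
    mem_fwdImageSubmodule_zero.mpr ⟨0, by rw [hδφ]; exact E.zero_mem, map_zero φ⟩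
  simpa [diracPair] using hperp _ h0

lemma mem_fwdImageSubmodule_zero_of_forall_diracPair_eq_zero [FiniteDimensional ℝ V]
    (hE : IsLagrangian E) {w : W} {β : Dual ℝ W}
    (hperp : ∀ y ∈ fwdImageSubmodule φ 0 E, diracPair (w, β) y = 0) :
    (w, β) ∈ fwdImageSubmodule φ 0 E := by
  obtain ⟨u, rfl⟩ := mem_range_of_forall_diracPair_eq_zero hperp
  let ρ : E →ₗ[ℝ] Dual ℝ (LinearMap.ker φ) :=
    (LinearMap.ker φ).subtype.dualMap ∘ₗ LinearMap.snd ℝ V (Dual ℝ V) ∘ₗ E.subtype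
  let c : Dual ℝ E :=
    (Dual.eval ℝ V u ∘ₗ LinearMap.snd ℝ V (Dual ℝ V) +
      β.comp φ ∘ₗ LinearMap.fst ℝ V (Dual ℝ V)) ∘ₗ E.subtype
  have hρ_apply : ∀ x k, ρ x k = (x : V × Dual ℝ V).2 k := fun _ _ => rfl
  have hc_apply : ∀ x : E, c x = (x : V × Dual ℝ V).2 u + β (φ (x : V × Dual ℝ V).1) :=
    fun _ => rfl
  have hρc : LinearMap.ker ρ ≤ LinearMap.ker c := by
    rintro ⟨⟨v, α⟩, hv⟩ hρ
    have hα : α ∈ LinearMap.range φ.dualMap := by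
      rw [LinearMap.range_dualMap_eq_dualAnnihilator_ker, Submodule.mem_dualAnnihilator]
      intro k hk
      rw [← hρ_apply ⟨(v, α), hv⟩ ⟨k, hk⟩, LinearMap.mem_ker.mp hρ, LinearMap.zero_apply]
    obtain ⟨δ, rfl⟩ := hα
    have hδ : (φ v, δ) ∈ fwdImageSubmodule φ 0 E := mem_fwdImageSubmodule_zero.mpr ⟨v, hv, rfl⟩
    have hpair := hperp _ hδ
    rw [LinearMap.mem_ker, hc_apply]
    simp only [diracPair, LinearMap.dualMap_apply] at hpair ⊢
    linarith
  obtain ⟨k, hk⟩ := LinearMap.exists_apply_eq_of_ker_le_ker (A := E) ρ c hρc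
  refine mem_fwdImageSubmodule_zero.mpr
    ⟨u - k, (hE _).mp ?_, by rw [map_sub, LinearMap.mem_ker.mp k.2, sub_zero]⟩
  rintro ⟨v, α⟩ hv
  have hkv := hk ⟨(v, α), hv⟩
  rw [hc_apply, hρ_apply] at hkv
  simp only [diracPair, map_sub, LinearMap.comp_apply] at hkv ⊢
  linarith

end Pushforward

theorem isLagrangian_fwdImageSubmodule [FiniteDimensional ℝ V] (φ : V →ₗ[ℝ] W)
    {ω : V →ₗ[ℝ] Dual ℝ V} (hω : ∀ v, ω v v = 0) {E : Submodule ℝ (V × Dual ℝ V)}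
    (hE : IsLagrangian E) : IsLagrangian (fwdImageSubmodule φ ω E) := by
  rw [fwdImageSubmodule_eq_bTransform]
  have hτE := hE.map _ (diracPair_bTransform hω)
  rintro ⟨w, β⟩
  exact ⟨mem_fwdImageSubmodule_zero_of_forall_diracPair_eq_zero hτE,
    fun hx _ hy => diracPair_eq_zero_of_mem_fwdImageSubmodule_zero hτE hx hy⟩

lemma eq_zero_of_diracRel_zero {φ : V →ₗ[ℝ] W} (hφ : Function.Injective φ)
    {ω : V →ₗ[ℝ] Dual ℝ V} {x : V × Dual ℝ V} (hx : DiracRel φ ω x 0) : x = 0 := by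
  obtain ⟨hφv, hα⟩ := (diracRel_zero_iff φ ω x).mp hx
  have hv : x.1 = 0 := hφ (by rw [hφv, map_zero])
  exact Prod.ext hv (by rw [hα, hv, map_zero]; rfl)

variable {U : Type*} [AddCommGroup U] [Module ℝ U]

lemma fwdImage_inl (E : Submodule ℝ (V × Dual ℝ V)) :
    fwdImage (LinearMap.inl ℝ V U) 0 E
      = {x | x.1.2 = 0 ∧ (x.1.1, x.2.comp (LinearMap.inl ℝ V U)) ∈ E} := by
  ext ⟨⟨v, u⟩, β⟩
  simp [fwdImage, DiracRel, Prod.ext_iff, and_comm, eq_comm]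

lemma fwdImage_inr_comp (Θ : V →ₗ[ℝ] U) (ω : V →ₗ[ℝ] Dual ℝ V) (E : Submodule ℝ (V × Dual ℝ V)) :
    fwdImage (LinearMap.inr ℝ V U ∘ₗ Θ) ω E
      = {x | x.1.1 = 0 ∧ (x.1.2, x.2.comp (LinearMap.inr ℝ V U)) ∈ fwdImage Θ ω E} := by
  ext ⟨⟨v, u⟩, β⟩
  simp [fwdImage, DiracRel, Prod.ext_iff, LinearMap.comp_assoc, and_left_comm]

end

theorem standard_path_of_strong_Dirac_morphism_general
    {V V' : Type*} [AddCommGroup V] [Module ℝ V] [FiniteDimensional ℝ V]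
    [AddCommGroup V'] [Module ℝ V']
    (Θ : V →ₗ[ℝ] V') (ω : V →ₗ[ℝ] Module.Dual ℝ V) (hω : ∀ v, ω v v = 0)
    (E : Submodule ℝ (V × Module.Dual ℝ V)) (hE : IsLagrangian E)
    (E' : Submodule ℝ (V' × Module.Dual ℝ V'))
    (h : IsStrongDiracMorphism Θ ω E E')
    (j : ℝ → (V →ₗ[ℝ] V × V'))
    (hj : ∀ t, j t = LinearMap.prod ((1 - t) • LinearMap.id) (t • Θ)) :
    (∀ t, t ≠ 1 → ∀ x, DiracRel (j t) (t • ω) x 0 → x = 0) ∧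
    (∀ x : V × Module.Dual ℝ V, DiracRel (j 1) ((1 : ℝ) • ω) x 0 ↔ DiracRel Θ ω x 0) ∧
    (∀ t, ∀ x ∈ E, DiracRel (j t) (t • ω) x 0 → x = 0) ∧
    (∀ t, ∃ Et : Submodule ℝ ((V × V') × Module.Dual ℝ (V × V')),
        (Et : Set ((V × V') × Module.Dual ℝ (V × V'))) = fwdImage (j t) (t • ω) E ∧
        IsLagrangian Et) ∧
    (fwdImage (j 0) ((0 : ℝ) • ω) E
        = {x : (V × V') × Module.Dual ℝ (V × V') |
            x.1.2 = 0 ∧ (x.1.1, x.2.comp (LinearMap.inl ℝ V V')) ∈ E}) ∧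
    (fwdImage (j 1) ((1 : ℝ) • ω) E
        = {x : (V × V') × Module.Dual ℝ (V × V') |
            x.1.1 = 0 ∧ (x.1.2, x.2.comp (LinearMap.inr ℝ V V')) ∈ E'}) := by
  have hj_apply : ∀ t v, j t v = ((1 - t) • v, t • Θ v) := fun t v => by rw [hj]; rfl
  have hj0 : j 0 = LinearMap.inl ℝ V V' := by ext v <;> simp [hj_apply]
  have hj1 : j 1 = LinearMap.inr ℝ V V' ∘ₗ Θ := by ext v <;> simp [hj_apply]
  have ker_one : ∀ x, DiracRel (j 1) ((1 : ℝ) • ω) x 0 ↔ DiracRel Θ ω x 0 := fun x => by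
    simp [diracRel_zero_iff, hj1]
  have ker_ne_one : ∀ t, t ≠ 1 → ∀ x, DiracRel (j t) (t • ω) x 0 → x = 0 := by
    intro t ht x
    refine eq_zero_of_diracRel_zero fun v w hvw => ?_
    rw [hj_apply, hj_apply] at hvw
    exact smul_right_injective V (sub_ne_zero.mpr ht.symm) (congrArg Prod.fst hvw)
  refine ⟨ker_ne_one, ker_one, ?_, fun t => ⟨_, coe_fwdImageSubmodule _ _ E,
    isLagrangian_fwdImageSubmodule (j t) (by simp [hω]) hE⟩, ?_, ?_⟩
  · intro t x hx hrel
    rcases eq_or_ne t 1 with rfl | ht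
    · exact h.2 x hx ((ker_one x).mp hrel)
    · exact ker_ne_one t ht x hrel
  · rw [hj0, zero_smul, fwdImage_inl]
  · rw [hj1, one_smul, fwdImage_inr_comp, ← h.1]
    rfl

/-- the standard path of Lagrangian subspaces associated to a strong
Dirac morphism.  For `t ∈ ℝ` let `j_t(v) = ((1-t)v, tΘv)` and `ω_t = tω`.  Then
`ker(j_t, tω) = 0` for `t ≠ 1`, `ker(j_1, ω) = ker(Θ, ω)`, `E ∩ ker(j_t,tω) = 0`
for all `t`, the forward images `E_t` of `E` are Lagrangian subspaces of `𝕍 ⊕ 𝕍'`,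
and `E_0 = E ⊕ (V')*`, `E_1 = V* ⊕ E'`. -/
theorem standard_path_of_strong_Dirac_morphism
    {V V' : Type*} [AddCommGroup V] [Module ℝ V] [FiniteDimensional ℝ V]
    [AddCommGroup V'] [Module ℝ V'] [FiniteDimensional ℝ V']
    (Θ : V →ₗ[ℝ] V') (ω : V →ₗ[ℝ] Module.Dual ℝ V) (hω : ∀ v, ω v v = 0)
    (E : Submodule ℝ (V × Module.Dual ℝ V)) (hE : IsLagrangian E)
    (E' : Submodule ℝ (V' × Module.Dual ℝ V')) (hE' : IsLagrangian E')
    (h : IsStrongDiracMorphism Θ ω E E')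
    (j : ℝ → (V →ₗ[ℝ] V × V'))
    (hj : ∀ t, j t = LinearMap.prod ((1 - t) • LinearMap.id) (t • Θ)) :
    (∀ t, t ≠ 1 → ∀ x, DiracRel (j t) (t • ω) x 0 → x = 0) ∧
    (∀ x : V × Module.Dual ℝ V, DiracRel (j 1) ((1 : ℝ) • ω) x 0 ↔ DiracRel Θ ω x 0) ∧
    (∀ t, ∀ x ∈ E, DiracRel (j t) (t • ω) x 0 → x = 0) ∧
    (∀ t, ∃ Et : Submodule ℝ ((V × V') × Module.Dual ℝ (V × V')),
        (Et : Set ((V × V') × Module.Dual ℝ (V × V'))) = fwdImage (j t) (t • ω) E ∧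
        IsLagrangian Et) ∧
    (fwdImage (j 0) ((0 : ℝ) • ω) E
        = {x : (V × V') × Module.Dual ℝ (V × V') |
            x.1.2 = 0 ∧ (x.1.1, x.2.comp (LinearMap.inl ℝ V V')) ∈ E}) ∧
    (fwdImage (j 1) ((1 : ℝ) • ω) E
        = {x : (V × V') × Module.Dual ℝ (V × V') |
            x.1.1 = 0 ∧ (x.1.2, x.2.comp (LinearMap.inr ℝ V V')) ∈ E'}) :=
  standard_path_of_strong_Dirac_morphism_general Θ ω hω E hE E' h j hj
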